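/- arXiv:math/0411242 — 3 statements merged into one kernel-verified Lean document; each statement's English description precedes it below -/
import Mathlib

section
/- Let g and n be natural numbers with g ≥ 1 and n ≥ 1. In the field ℚ(t) of rational functions over ℚ, define P₁ = (1+t)^{2g}/(1−t²), P₂ = (1+t²)^{n−1}(1+t)^{2g}(1+t³)^{2g}/(1−t²)³, P₃ = (1+2t²+2t⁴+t⁶)^{n−1}(1+t)^{2g}(1+t³)^{2g}(1+t⁵)^{2g}/((1−t²)⁴(1−t⁴)). Then (1−t²)·( P₃ + (1+t²+t⁴)^n·t^{4g−2}·(1+t²)/(t⁶−1)·P₁·P₂ + (1+2t²+2t⁴+t⁶)^n·t^{6g−2}/(t⁴−1)²·P₁³ ) = (1+t)^{2g}(1+2t²+2t⁴+t⁶)^{n−1} · [ (1+t³)^{2g}(1+t⁵)^{2g} + (1+t)^{4g}(1+t²+t⁴)t^{6g−2} − (1+t)^{2g}(1+t³)^{2g}(1+t²)²t^{4g−2} ] / ((1−t²)³(1−t⁴)). -/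
/-!
Write `Q = 1 + 2t² + 2t⁴ + t⁶`. Everything follows from the factorizations `Q = (1 + t²)(1 + t² + t⁴)`,
`1 - t⁴ = (1 - t²)(1 + t²)` and `1 - t⁶ = (1 - t²)(1 + t² + t⁴)`: after them, each of the three
Harder–Narasimhan contributions on the left becomes one of the three terms of the bracket on the
right. The powers of `1 + t`, `1 + t³`, `1 + t⁵` and of `t` only ride along, so the identity holds
in any field for arbitrary values `A, B, C, u, v` in their place.
-/

theorem RatFunc.one_sub_X_pow_ne_zero {K : Type*} [Field K] {k : ℕ} (hk : 0 < k) :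
    (1 - RatFunc.X ^ k : RatFunc K) ≠ 0 := by
  have hp : (1 - Polynomial.X ^ k : Polynomial K) ≠ 0 := by
    rw [← neg_ne_zero, neg_sub, ← map_one Polynomial.C]
    exact Polynomial.X_pow_sub_C_ne_zero hk 1
  simpa using RatFunc.algebraMap_ne_zero hp

theorem rank_three_contributions_sum {K : Type*} [Field K] (t A B C u v : K) (m : ℕ)
    (h₂ : 1 - t ^ 2 ≠ 0) (h₄ : 1 - t ^ 4 ≠ 0) (h₆ : 1 - t ^ 6 ≠ 0) :
    (1 - t ^ 2) *
        ((1 + 2 * t ^ 2 + 2 * t ^ 4 + t ^ 6) ^ m * A * B * C / ((1 - t ^ 2) ^ 4 * (1 - t ^ 4))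
          + (1 + t ^ 2 + t ^ 4) ^ (m + 1) * u * (1 + t ^ 2) / (t ^ 6 - 1)
              * (A / (1 - t ^ 2)) * ((1 + t ^ 2) ^ m * A * B / (1 - t ^ 2) ^ 3)
          + (1 + 2 * t ^ 2 + 2 * t ^ 4 + t ^ 6) ^ (m + 1) * v / (t ^ 4 - 1) ^ 2
              * (A / (1 - t ^ 2)) ^ 3)
      = A * (1 + 2 * t ^ 2 + 2 * t ^ 4 + t ^ 6) ^ m
          * (B * C + A ^ 2 * (1 + t ^ 2 + t ^ 4) * v - A * B * (1 + t ^ 2) ^ 2 * u)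
          / ((1 - t ^ 2) ^ 3 * (1 - t ^ 4)) := by
  have hS : 1 + t ^ 2 ≠ 0 := fun h => h₄ (by linear_combination (1 - t ^ 2) * h)
  have hR : 1 + t ^ 2 + t ^ 4 ≠ 0 := fun h => h₆ (by linear_combination (1 - t ^ 2) * h)
  have hQ : 1 + 2 * t ^ 2 + 2 * t ^ 4 + t ^ 6 = (1 + t ^ 2) * (1 + t ^ 2 + t ^ 4) := by ring
  have h₄' : t ^ 4 - 1 = -((1 - t ^ 2) * (1 + t ^ 2)) := by ring
  have h₆' : t ^ 6 - 1 = -((1 - t ^ 2) * (1 + t ^ 2 + t ^ 4)) := by ring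
  have h₄'' : 1 - t ^ 4 = (1 - t ^ 2) * (1 + t ^ 2) := by ring
  simp only [hQ, h₄', h₆', h₄'', mul_pow]
  field_simp
  ring

open RatFunc in
theorem holla_rank_three_simplification_general (g n : ℕ) (hn : 1 ≤ n) :
    (fun (t : RatFunc ℚ) =>
      (fun (P₁ P₂ P₃ : RatFunc ℚ) =>
        (1 - t ^ 2) *
          (P₃
            + (1 + t ^ 2 + t ^ 4) ^ n * t ^ (4 * g - 2) * (1 + t ^ 2) / (t ^ 6 - 1)
                * P₁ * P₂
            + (1 + 2 * t ^ 2 + 2 * t ^ 4 + t ^ 6) ^ n * t ^ (6 * g - 2) / (t ^ 4 - 1) ^ 2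
                * P₁ ^ 3)
        = (1 + t) ^ (2 * g) * (1 + 2 * t ^ 2 + 2 * t ^ 4 + t ^ 6) ^ (n - 1)
            * ((1 + t ^ 3) ^ (2 * g) * (1 + t ^ 5) ^ (2 * g)
                + (1 + t) ^ (4 * g) * (1 + t ^ 2 + t ^ 4) * t ^ (6 * g - 2)
                - (1 + t) ^ (2 * g) * (1 + t ^ 3) ^ (2 * g) * (1 + t ^ 2) ^ 2
                    * t ^ (4 * g - 2))
            / ((1 - t ^ 2) ^ 3 * (1 - t ^ 4)))
      ((1 + t) ^ (2 * g) / (1 - t ^ 2))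
      ((1 + t ^ 2) ^ (n - 1) * (1 + t) ^ (2 * g) * (1 + t ^ 3) ^ (2 * g)
        / (1 - t ^ 2) ^ 3)
      ((1 + 2 * t ^ 2 + 2 * t ^ 4 + t ^ 6) ^ (n - 1) * (1 + t) ^ (2 * g)
          * (1 + t ^ 3) ^ (2 * g) * (1 + t ^ 5) ^ (2 * g)
        / ((1 - t ^ 2) ^ 4 * (1 - t ^ 4))))
    RatFunc.X := by
  obtain ⟨m, rfl⟩ : ∃ m, n = m + 1 := ⟨n - 1, by omega⟩
  have hA : (1 + X : RatFunc ℚ) ^ (4 * g) = ((1 + X) ^ (2 * g)) ^ 2 := by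
    rw [← pow_mul]; ring_nf
  simp only [Nat.add_sub_cancel, hA]
  exact rank_three_contributions_sum _ _ _ _ _ _ m (one_sub_X_pow_ne_zero (by norm_num))
    (one_sub_X_pow_ne_zero (by norm_num)) (one_sub_X_pow_ne_zero (by norm_num))

open RatFunc in
/-- The rational function identity behind the closed formula for the
Poincaré polynomial of the moduli space of stable rank 3 parabolic bundles
with full flags at `n` points on a genus `g` curve. -/
theorem holla_rank_three_simplification (g n : ℕ) (hg : 1 ≤ g) (hn : 1 ≤ n) :
    (fun (t : RatFunc ℚ) =>
      (fun (P₁ P₂ P₃ : RatFunc ℚ) =>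
        (1 - t ^ 2) *
          (P₃
            + (1 + t ^ 2 + t ^ 4) ^ n * t ^ (4 * g - 2) * (1 + t ^ 2) / (t ^ 6 - 1)
                * P₁ * P₂
            + (1 + 2 * t ^ 2 + 2 * t ^ 4 + t ^ 6) ^ n * t ^ (6 * g - 2) / (t ^ 4 - 1) ^ 2
                * P₁ ^ 3)
        = (1 + t) ^ (2 * g) * (1 + 2 * t ^ 2 + 2 * t ^ 4 + t ^ 6) ^ (n - 1)
            * ((1 + t ^ 3) ^ (2 * g) * (1 + t ^ 5) ^ (2 * g)
                + (1 + t) ^ (4 * g) * (1 + t ^ 2 + t ^ 4) * t ^ (6 * g - 2)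
                - (1 + t) ^ (2 * g) * (1 + t ^ 3) ^ (2 * g) * (1 + t ^ 2) ^ 2
                    * t ^ (4 * g - 2))
            / ((1 - t ^ 2) ^ 3 * (1 - t ^ 4)))
      ((1 + t) ^ (2 * g) / (1 - t ^ 2))
      ((1 + t ^ 2) ^ (n - 1) * (1 + t) ^ (2 * g) * (1 + t ^ 3) ^ (2 * g)
        / (1 - t ^ 2) ^ 3)
      ((1 + 2 * t ^ 2 + 2 * t ^ 4 + t ^ 6) ^ (n - 1) * (1 + t) ^ (2 * g)
          * (1 + t ^ 3) ^ (2 * g) * (1 + t ^ 5) ^ (2 * g)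
        / ((1 - t ^ 2) ^ 4 * (1 - t ^ 4))))
    RatFunc.X :=
  holla_rank_three_simplification_general g n hn
end

section
/- Let m be a natural number and c an integer. Define ε(c) = 2 if 3 divides c and ε(c) = −1 otherwise. Then in the polynomial ring ℤ[t] one has 3 · ∑_{m₁=0}^{m} ∑_{m₂=0}^{m} δ₃(m₁+2m₂+c) · C(m,m₁)·C(m,m₂) · t^{2m−m₁−m₂} = ε(c)·(t²−t+1)^{m} + (t+1)^{2m}, where δ₃(N) = 1 if 3 divides N and δ₃(N) = 0 otherwise, and C(m,k) is the binomial coefficient. -/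
open Polynomial Finset

/-- The reflected double sum with exponent `m₁+m₂`. -/
noncomputable def Tm (m : ℕ) (c : ℤ) : Polynomial ℤ :=
  ∑ m₁ ∈ Finset.range (m + 1), ∑ m₂ ∈ Finset.range (m + 1),
    (if (3 : ℤ) ∣ ((m₁ : ℤ) + 2 * m₂ + c) then (1 : Polynomial ℤ) else 0)
      * (m.choose m₁ : Polynomial ℤ) * (m.choose m₂ : Polynomial ℤ) * X ^ (m₁ + m₂)

/-- The basic term. -/
noncomputable def hp (d : ℤ) (a b : ℕ) : Polynomial ℤ :=
  (if (3 : ℤ) ∣ ((a : ℤ) + 2 * b + d) then (1 : Polynomial ℤ) else 0) * X ^ (a + b)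

lemma hTm (n : ℕ) (d : ℤ) :
    Tm n d = ∑ a ∈ Finset.range (n + 1), (n.choose a : Polynomial ℤ) *
      ∑ b ∈ Finset.range (n + 1), (n.choose b : Polynomial ℤ) * hp d a b := by
  unfold Tm hp
  simp only [Finset.mul_sum]
  exact Finset.sum_congr rfl fun a _ => Finset.sum_congr rfl fun b _ => by ring

lemma hp_shift_a (d : ℤ) (a b : ℕ) : hp d (a + 1) b = X * hp (d + 1) a b := by
  unfold hp
  have h : ((3 : ℤ) ∣ (((a : ℕ) + 1 : ℕ) : ℤ) + 2 * b + d) ↔ ((3 : ℤ) ∣ (a : ℤ) + 2 * b + (d + 1)) := by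
    push_cast; constructor <;> intro h <;> omega
  rw [if_congr h rfl rfl, show a + 1 + b = (a + b) + 1 by omega, pow_succ]
  ring

lemma hp_shift_b (d : ℤ) (a b : ℕ) : hp d a (b + 1) = X * hp (d + 2) a b := by
  unfold hp
  have h : ((3 : ℤ) ∣ (a : ℤ) + 2 * (((b : ℕ) + 1 : ℕ) : ℤ) + d) ↔ ((3 : ℤ) ∣ (a : ℤ) + 2 * b + (d + 2)) := by
    push_cast; constructor <;> intro h <;> omega
  rw [if_congr h rfl rfl, show a + (b + 1) = (a + b) + 1 by omega, pow_succ]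
  ring

lemma hp_period (d : ℤ) (a b : ℕ) : hp (d + 3) a b = hp d a b := by
  unfold hp
  have h : ((3 : ℤ) ∣ (a : ℤ) + 2 * b + (d + 3)) ↔ ((3 : ℤ) ∣ (a : ℤ) + 2 * b + d) := by
    constructor <;> intro h <;> omega
  rw [if_congr h rfl rfl]

lemma pascal_sum (m : ℕ) (f : ℕ → Polynomial ℤ) :
    ∑ k ∈ Finset.range (m + 1 + 1), ((m + 1).choose k : Polynomial ℤ) * f k
    = ∑ k ∈ Finset.range (m + 1), (m.choose k : Polynomial ℤ) * f k
      + ∑ k ∈ Finset.range (m + 1), (m.choose k : Polynomial ℤ) * f (k + 1) := by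
  rw [Finset.sum_range_succ' _ (m + 1)]
  have h1 : ∀ k, ((m+1).choose (k+1) : Polynomial ℤ) * f (k+1)
      = (m.choose k : Polynomial ℤ) * f (k+1) + (m.choose (k+1) : Polynomial ℤ) * f (k+1) := by
    intro k
    rw [Nat.choose_succ_succ]
    push_cast
    ring
  rw [Finset.sum_congr rfl fun k _ => h1 k, Finset.sum_add_distrib]
  have h2 : ∑ k ∈ Finset.range (m+1), (m.choose (k+1) : Polynomial ℤ) * f (k+1)
      + ((m+1).choose 0 : Polynomial ℤ) * f 0
      = ∑ k ∈ Finset.range (m+1), (m.choose k : Polynomial ℤ) * f k := by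
    rw [Finset.sum_range_succ _ m, Nat.choose_succ_self]
    rw [Finset.sum_range_succ' (fun k => (m.choose k : Polynomial ℤ) * f k) m]
    simp
  linear_combination h2

lemma Tm_succ (m : ℕ) (c : ℤ) :
    Tm (m + 1) c = (X ^ 2 + 1) * Tm m c + X * (Tm m (c + 1) + Tm m (c + 2)) := by
  rw [hTm (m + 1) c, pascal_sum]
  have inner : ∀ a : ℕ, ∑ b ∈ Finset.range (m + 1 + 1), ((m + 1).choose b : Polynomial ℤ) * hp c a b
      = ∑ b ∈ Finset.range (m + 1), (m.choose b : Polynomial ℤ) * hp c a b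
        + ∑ b ∈ Finset.range (m + 1), (m.choose b : Polynomial ℤ) * hp c a (b + 1) :=
    fun a => pascal_sum m (hp c a)
  have P1 : ∑ a ∈ Finset.range (m + 1), (m.choose a : Polynomial ℤ) *
        ∑ b ∈ Finset.range (m + 1 + 1), ((m + 1).choose b : Polynomial ℤ) * hp c a b
      = Tm m c + X * Tm m (c + 2) := by
    rw [hTm m c, hTm m (c + 2), Finset.mul_sum, ← Finset.sum_add_distrib]
    refine Finset.sum_congr rfl fun a _ => ?_
    rw [inner a, mul_add]
    congr 1
    rw [Finset.mul_sum, Finset.mul_sum, Finset.mul_sum]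
    refine Finset.sum_congr rfl fun b _ => ?_
    rw [hp_shift_b]
    ring
  have P2 : ∑ a ∈ Finset.range (m + 1), (m.choose a : Polynomial ℤ) *
        ∑ b ∈ Finset.range (m + 1 + 1), ((m + 1).choose b : Polynomial ℤ) * hp c (a + 1) b
      = X * Tm m (c + 1) + X ^ 2 * Tm m c := by
    rw [hTm m (c + 1), hTm m c, Finset.mul_sum, Finset.mul_sum, ← Finset.sum_add_distrib]
    refine Finset.sum_congr rfl fun a _ => ?_
    rw [inner (a + 1), mul_add]
    congr 1
    · rw [Finset.mul_sum, Finset.mul_sum, Finset.mul_sum]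
      refine Finset.sum_congr rfl fun b _ => ?_
      rw [hp_shift_a]
      ring
    · rw [Finset.mul_sum, Finset.mul_sum, Finset.mul_sum]
      refine Finset.sum_congr rfl fun b _ => ?_
      rw [hp_shift_a, hp_shift_b, show c + 1 + 2 = c + 3 by ring, hp_period]
      ring
  rw [P1, P2]
  ring

lemma Tm_eq (m : ℕ) : ∀ c : ℤ, (3 : Polynomial ℤ) * Tm m c
    = C (if (3 : ℤ) ∣ c then 2 else -1) * (X ^ 2 - X + 1) ^ m + (X + 1) ^ (2 * m) := by
  induction m with
  | zero =>
    intro c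
    unfold Tm
    simp only [Finset.range_one, Finset.sum_singleton, Nat.choose_self, Nat.cast_one,
      Nat.cast_zero, pow_zero, mul_zero, zero_add, mul_one, one_mul, Nat.cast_ofNat]
    norm_num
    split_ifs with h
    · norm_num
    · norm_num
  | succ n ih =>
    intro c
    have hε : (C (if (3 : ℤ) ∣ (c + 1) then 2 else -1) + C (if (3 : ℤ) ∣ (c + 2) then 2 else -1)
        : Polynomial ℤ) = - C (if (3 : ℤ) ∣ c then 2 else -1) := by
      rw [← C_add, ← C_neg]
      congr 1
      split_ifs <;> omega
    rw [Tm_succ]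
    linear_combination (X ^ 2 + 1) * ih c + X * ih (c + 1) + X * ih (c + 2)
      + X * (X ^ 2 - X + 1) ^ n * hε

open Polynomial in
/-- With `ε(c) = 2` if `3 ∣ c` and `ε(c) = -1` otherwise,
`3·Σ_{m₁,m₂=0}^{m} δ₃(m₁+2m₂+c)·C(m,m₁)C(m,m₂)·t^{2m-m₁-m₂}
  = ε(c)·(t²-t+1)^m + (t+1)^{2m}` in `ℤ[t]`. -/
theorem delta_three_binomial_sum (m : ℕ) (c : ℤ) :
    (3 : Polynomial ℤ) *
      ∑ m₁ ∈ Finset.range (m + 1), ∑ m₂ ∈ Finset.range (m + 1),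
        (if (3 : ℤ) ∣ ((m₁ : ℤ) + 2 * m₂ + c) then (1 : Polynomial ℤ) else 0)
          * (m.choose m₁ : Polynomial ℤ) * (m.choose m₂ : Polynomial ℤ)
          * X ^ (2 * m - m₁ - m₂)
    = C (if (3 : ℤ) ∣ c then 2 else -1) * (X ^ 2 - X + 1) ^ m
        + (X + 1) ^ (2 * m) := by
  have hS : Tm m (-c) = ∑ m₁ ∈ Finset.range (m + 1), ∑ m₂ ∈ Finset.range (m + 1),
      (if (3 : ℤ) ∣ ((m₁ : ℤ) + 2 * m₂ + c) then (1 : Polynomial ℤ) else 0)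
        * (m.choose m₁ : Polynomial ℤ) * (m.choose m₂ : Polynomial ℤ)
        * X ^ (2 * m - m₁ - m₂) := by
    unfold Tm
    rw [← Finset.sum_range_reflect]
    refine Finset.sum_congr rfl fun a ha => ?_
    rw [← Finset.sum_range_reflect]
    refine Finset.sum_congr rfl fun b hb => ?_
    have ha' : a ≤ m := by simpa using Nat.lt_succ_iff.mp (Finset.mem_range.mp ha)
    have hb' : b ≤ m := by simpa using Nat.lt_succ_iff.mp (Finset.mem_range.mp hb)
    have e1 : m + 1 - 1 - a = m - a := by omega
    have e2 : m + 1 - 1 - b = m - b := by omega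
    rw [e1, e2, Nat.choose_symm ha', Nat.choose_symm hb']
    have e3 : m - a + (m - b) = 2 * m - a - b := by omega
    rw [e3]
    have hcond : ((3 : ℤ) ∣ ((m - a : ℕ) : ℤ) + 2 * ((m - b : ℕ) : ℤ) + (-c))
        ↔ ((3 : ℤ) ∣ (a : ℤ) + 2 * b + c) := by
      rw [Nat.cast_sub ha', Nat.cast_sub hb']
      constructor <;> intro h <;> omega
    rw [if_congr hcond rfl rfl]
  rw [← hS, Tm_eq]
  congr 2
  simp [dvd_neg]
end

section
/- Let n ≥ 1 and m be natural numbers and c an integer. Then in the polynomial ring ℤ[t] one has ∑_{ϖ : {1,…,n} → S₃} ∑_{m₁=0}^{m} ∑_{m₂=0}^{m} δ₃( m₁ + 2m₂ + c + ∑_{p=1}^{n}(s₁(ϖ(p)) + 2s₂(ϖ(p))) ) · C(m,m₁)·C(m,m₂) · t^{2m−m₁−m₂} = 2·6^{n−1}·(t+1)^{2m}, where δ₃(N) = 1 if 3 divides N and δ₃(N) = 0 otherwise, and C(m,k) is the binomial coefficient. -/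
/-- `s₁(σ) = 1` if `σ(0) > σ(1)`, else `0`. -/
def s₁ (σ : Equiv.Perm (Fin 3)) : ℕ := if σ 1 < σ 0 then 1 else 0

/-- `s₂(σ) = 1` if `σ(1) > σ(2)`, else `0`. -/
def s₂ (σ : Equiv.Perm (Fin 3)) : ℕ := if σ 2 < σ 1 then 1 else 0

/-! Reduced mod 3, `σ ↦ s₁ σ + 2 s₂ σ` takes every value on exactly two of the six permutations.
So once all coordinates of `ϖ` but the first are fixed, exactly two choices of the first satisfy
the congruence: for every `m₁, m₂` it holds for `2 · 6 ^ (n - 1)` tuples, whatever `m₁, m₂, c`.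
What remains is the square of the binomial expansion of `(t + 1) ^ m`. -/

open Finset

theorem card_filter_sum_eq_of_card_fiber_eq {α G : Type*} [Fintype α] [AddCommGroup G]
    [DecidableEq G] {f : α → G} {k : ℕ} (hf : ∀ g, #{a | f a = g} = k) (n : ℕ) (g : G) :
    #{ϖ : Fin (n + 1) → α | ∑ p, f (ϖ p) = g} = k * Fintype.card α ^ n := by
  have hcons : ∀ (a : α) (ϖ : Fin n → α),
      (∑ p, f ((Fin.cons a ϖ : Fin (n + 1) → α) p) = g) ↔ f a = g - ∑ p, f (ϖ p) := fun a ϖ => by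
    rw [Fin.sum_univ_succ, eq_sub_iff_add_eq]; simp only [Fin.cons_zero, Fin.cons_succ]
  calc #{ϖ : Fin (n + 1) → α | ∑ p, f (ϖ p) = g}
      = #{q : α × (Fin n → α) | f q.1 = g - ∑ p, f (q.2 p)} := by
        rw [← card_map (Fin.consEquiv fun _ => α).symm.toEmbedding]
        congr 1; ext q; simp [hcons]
    _ = ∑ ϖ : Fin n → α, #{a | f a = g - ∑ p, f (ϖ p)} := by
        simp only [card_filter, Fintype.sum_prod_type_right]
    _ = k * Fintype.card α ^ n := by simp [hf, mul_comm]

def descentResidue (σ : Equiv.Perm (Fin 3)) : ZMod 3 := ((s₁ σ + 2 * s₂ σ : ℕ) : ZMod 3)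

theorem card_descentResidue_eq (r : ZMod 3) : #{σ | descentResidue σ = r} = 2 := by
  revert r; decide

theorem sum_choose_mul_choose_mul_pow {R : Type*} [CommSemiring R] (x : R) (m : ℕ) :
    ∑ m₁ ∈ range (m + 1), ∑ m₂ ∈ range (m + 1),
      (m.choose m₁ : R) * m.choose m₂ * x ^ (2 * m - m₁ - m₂) = (x + 1) ^ (2 * m) := by
  have hbinom : (x + 1) ^ m = ∑ j ∈ range (m + 1), (m.choose j : R) * x ^ (m - j) := by
    rw [add_comm, add_pow]; simp [mul_comm]
  rw [two_mul, pow_add, hbinom, sum_mul_sum]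
  refine sum_congr rfl fun m₁ h₁ => sum_congr rfl fun m₂ h₂ => ?_
  rw [mem_range] at h₁ h₂
  rw [show m + m - m₁ - m₂ = (m - m₁) + (m - m₂) by omega, pow_add]
  ring

theorem card_three_dvd_add_sum_descents (n : ℕ) (a : ℤ) :
    #{ϖ : Fin (n + 1) → Equiv.Perm (Fin 3) |
      (3 : ℤ) ∣ a + ((∑ p, (s₁ (ϖ p) + 2 * s₂ (ϖ p)) : ℕ) : ℤ)} = 2 * 6 ^ n := by
  have hmod : ∀ ϖ : Fin (n + 1) → Equiv.Perm (Fin 3),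
      (3 : ℤ) ∣ a + ((∑ p, (s₁ (ϖ p) + 2 * s₂ (ϖ p)) : ℕ) : ℤ) ↔
        ∑ p, descentResidue (ϖ p) = -(a : ZMod 3) := fun ϖ => by
    rw [← Nat.cast_ofNat, ← ZMod.intCast_zmod_eq_zero_iff_dvd, eq_neg_iff_add_eq_zero, add_comm]
    simp [descentResidue]
  simp only [hmod, card_filter_sum_eq_of_card_fiber_eq card_descentResidue_eq, Fintype.card_perm,
    Fintype.card_fin, Nat.factorial]

open Polynomial in
/-- For `n ≥ 1`, in `ℤ[t]`:
`Σ_ϖ Σ_{m₁,m₂=0}^{m} δ₃(m₁+2m₂+c+Σ_p(s₁+2s₂))·C(m,m₁)C(m,m₂)·t^{2m-m₁-m₂}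
  = 2·6^{n-1}·(t+1)^{2m}`. -/
theorem variant_cohomology_sum (n m : ℕ) (hn : 1 ≤ n) (c : ℤ) :
    ∑ ϖ : Fin n → Equiv.Perm (Fin 3),
      ∑ m₁ ∈ Finset.range (m + 1), ∑ m₂ ∈ Finset.range (m + 1),
        (if (3 : ℤ) ∣ ((m₁ : ℤ) + 2 * m₂ + c
            + ((∑ p : Fin n, (s₁ (ϖ p) + 2 * s₂ (ϖ p)) : ℕ) : ℤ))
          then (1 : Polynomial ℤ) else 0)
          * (m.choose m₁ : Polynomial ℤ) * (m.choose m₂ : Polynomial ℤ)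
          * X ^ (2 * m - m₁ - m₂)
    = 2 * 6 ^ (n - 1) * (X + 1) ^ (2 * m) := by
  obtain ⟨k, rfl⟩ : ∃ k, n = k + 1 := ⟨n - 1, by omega⟩
  rw [Nat.add_sub_cancel, ← sum_choose_mul_choose_mul_pow, mul_sum, sum_comm]
  refine sum_congr rfl fun m₁ _ => ?_
  rw [sum_comm, mul_sum]
  refine sum_congr rfl fun m₂ _ => ?_
  simp only [mul_assoc, ← sum_mul, sum_boole, card_three_dvd_add_sum_descents]
  push_cast
  ring
end
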